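/- Let d ≥ 4 and let V = ℚ_p^d with basis e₁, …, e_d. Let U ≤ ⋀²V be the span of all e_k ∧ e_l with 1 ≤ k < l ≤ d such that not both k and l lie in {1,2,3,4}, and set x = e₁ ∧ e₂ + e₃ ∧ e₄. Then the subspace ⟨x⟩ ⊕ U is not spanned by decomposables, and consequently every subspace S ≤ ⋀²V satisfying S + U = ⟨x⟩ ⊕ U is not spanned by decomposables. -/

import Mathlib

/-!
Restricting vectors to the first four coordinates induces an algebra map `π` on exterior
algebras which kills `U` and sends `x` to `e₁ ∧ e₂ + e₃ ∧ e₄`, whose square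
`2 e₁ ∧ e₂ ∧ e₃ ∧ e₄` is nonzero. A decomposable element `a x + u` of `⟨x⟩ ⊕ U` squares to
zero, hence so does its image `a π(x)`, which forces `a = 0`. So the decomposables of
`⟨x⟩ ⊕ U`, and a fortiori those of any `S` with `S + U = ⟨x⟩ ⊕ U`, span a subspace of `U`,
which does not contain `x`.
-/

open Module

noncomputable section

variable (K : Type*) [CommRing K] (V : Type*) [AddCommGroup V] [Module K V]

/-- The set of decomposable elements of the exterior square, viewed inside the
exterior algebra: elements of the form `v ∧ w`. -/
def DecompSet : Set (ExteriorAlgebra K V) :=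
  {x | ∃ v w : V, x = ExteriorAlgebra.ι K v * ExteriorAlgebra.ι K w}

/-- The second exterior power `⋀² V`, realised as the span of all decomposable
wedges inside the exterior algebra. -/
def grade2 : Submodule K (ExteriorAlgebra K V) := Submodule.span K (DecompSet K V)

/-- A subspace `L ≤ ⋀² V` is spanned by decomposables if it equals the span of the
set of decomposable elements contained in it. -/
def SpannedByDecomposables (L : Submodule K (ExteriorAlgebra K V)) : Prop :=
  L = Submodule.span K ((L : Set (ExteriorAlgebra K V)) ∩ DecompSet K V)

end

namespace ExteriorAlgebra

section CommRing

variable {R M : Type*} [CommRing R] [AddCommGroup M] [Module R M]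

theorem commute_ι_mul_ι_ι (a b c : M) : Commute (ι R a * ι R b) (ι R c) := by
  have hswap : ∀ u w : M, ι R u * ι R w = -(ι R w * ι R u) := fun u w =>
    eq_neg_of_add_eq_zero_left (ι_add_mul_swap u w)
  calc ι R a * ι R b * ι R c = ι R a * (ι R b * ι R c) := mul_assoc _ _ _
    _ = ι R c * (ι R a * ι R b) := by rw [hswap b, mul_neg, ← mul_assoc, hswap a]; noncomm_ring

theorem commute_ι_mul_ι (a b c d : M) : Commute (ι R a * ι R b) (ι R c * ι R d) :=
  (commute_ι_mul_ι_ι a b c).mul_right (commute_ι_mul_ι_ι a b d)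

theorem ι_mul_ι_mul_self (a b : M) : ι R a * ι R b * (ι R a * ι R b) = 0 := by
  rw [← mul_assoc, (commute_ι_mul_ι_ι a b a).eq, ← mul_assoc, ι_sq_zero, zero_mul, zero_mul]

theorem ι_mul_ι_add_ι_mul_ι_mul_self (v : Fin 4 → M) :
    (ι R (v 0) * ι R (v 1) + ι R (v 2) * ι R (v 3)) *
        (ι R (v 0) * ι R (v 1) + ι R (v 2) * ι R (v 3)) = 2 • ιMulti R 4 v := by
  have hv : ιMulti R 4 v = ι R (v 0) * ι R (v 1) * (ι R (v 2) * ι R (v 3)) := by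
    simp [ιMulti_apply, mul_assoc, Matrix.vecTail]
  rw [hv, add_mul, mul_add, mul_add, ι_mul_ι_mul_self, ι_mul_ι_mul_self,
    (commute_ι_mul_ι (v 2) (v 3) (v 0) (v 1)).eq, two_nsmul]
  abel

end CommRing

section Field

variable {K V : Type*} [Field K] [AddCommGroup V] [Module K V]

theorem ιMulti_ne_zero {n : ℕ} {v : Fin n → V} (hv : LinearIndependent K v) :
    ιMulti K n v ≠ 0 := by
  have := (exteriorPower.ιMulti_family_linearIndependent_field (n := n) hv).ne_zero
    (Set.powersetCard.ofFinEmbEquiv (RelEmbedding.refl (α := Fin n) (· ≤ ·)))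
  simp only [exteriorPower.ιMulti_family, Equiv.symm_apply_apply] at this
  exact fun h => this (Subtype.ext h)

theorem ι_mul_ι_add_ι_mul_ι_mul_self_ne_zero (h2 : (2 : K) ≠ 0) {v : Fin 4 → V}
    (hv : LinearIndependent K v) :
    (ι K (v 0) * ι K (v 1) + ι K (v 2) * ι K (v 3)) *
        (ι K (v 0) * ι K (v 1) + ι K (v 2) * ι K (v 3)) ≠ 0 := by
  rw [ι_mul_ι_add_ι_mul_ι_mul_self, ← Nat.cast_smul_eq_nsmul K, Nat.cast_ofNat]
  exact smul_ne_zero h2 (ιMulti_ne_zero hv)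

end Field

end ExteriorAlgebra

open ExteriorAlgebra

section

variable {K V : Type*} [CommRing K] [AddCommGroup V] [Module K V]

theorem not_spannedByDecomposables_of_inter_decompSet_subset
    {L U S : Submodule K (ExteriorAlgebra K V)} (hLU : (L : Set _) ∩ DecompSet K V ⊆ U)
    (hL : ¬L ≤ U) (hS : S ⊔ U = L) : ¬SpannedByDecomposables K V S := by
  intro hspan
  have hSL : S ≤ L := hS ▸ le_sup_left
  have hSU : S ≤ U := by
    rw [hspan, Submodule.span_le]
    exact (Set.inter_subset_inter_left _ hSL).trans hLU
  exact hL (hS ▸ sup_le hSU le_rfl)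

end

section

variable {K V A : Type*} [Field K] [AddCommGroup V] [Module K V] [Ring A] [Algebra K A]

theorem span_singleton_sup_inter_decompSet_subset {π : ExteriorAlgebra K V →ₐ[K] A}
    {U : Submodule K (ExteriorAlgebra K V)} (hU : ∀ u ∈ U, π u = 0) {x : ExteriorAlgebra K V}
    (hx : π x * π x ≠ 0) :
    ((Submodule.span K {x} ⊔ U : Submodule K _) : Set _) ∩ DecompSet K V ⊆ U := by
  rintro _ ⟨hy, v, w, rfl⟩
  obtain ⟨_, hs, u, hu, hsu⟩ := Submodule.mem_sup.mp hy
  obtain ⟨a, rfl⟩ := Submodule.mem_span_singleton.mp hs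
  have hπ : π (ι K v * ι K w) = a • π x := by rw [← hsu, map_add, map_smul, hU u hu, add_zero]
  have hsq : (a * a) • (π x * π x) = 0 := by
    rw [← smul_mul_smul_comm, ← hπ, ← map_mul, ι_mul_ι_mul_self, map_zero]
  obtain rfl : a = 0 := mul_self_eq_zero.mp ((smul_eq_zero.mp hsq).resolve_right hx)
  rwa [SetLike.mem_coe, ← hsu, zero_smul, zero_add]

theorem not_span_singleton_sup_le {π : ExteriorAlgebra K V →ₐ[K] A}
    {U : Submodule K (ExteriorAlgebra K V)} (hU : ∀ u ∈ U, π u = 0) {x : ExteriorAlgebra K V}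
    (hx : π x * π x ≠ 0) : ¬Submodule.span K {x} ⊔ U ≤ U := fun h => by
  rw [hU x (h (Submodule.mem_sup_left (Submodule.mem_span_singleton_self x))), mul_zero] at hx
  exact hx rfl

end

section

variable {R M : Type*} [Semiring R] [AddCommMonoid M] [Module R M] {m d : ℕ} (hd : m ≤ d)

theorem LinearMap.funLeft_castLE_single_of_lt {k : Fin d} (hk : (k : ℕ) < m) (a : M) :
    funLeft R M (Fin.castLE hd) (Pi.single k a) = Pi.single ⟨k, hk⟩ a := by
  ext j
  simp [funLeft_apply, Pi.single_apply, Fin.ext_iff]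

theorem LinearMap.funLeft_castLE_single_of_le {k : Fin d} (hk : m ≤ (k : ℕ)) (a : M) :
    funLeft R M (Fin.castLE hd) (Pi.single k a) = 0 := by
  ext j
  simp only [funLeft_apply, Pi.single_apply, Fin.ext_iff, Fin.val_castLE, Pi.zero_apply]
  exact if_neg (by omega)

end

/-- let `d ≥ 4`, `V = ℚ_p^d` with standard basis `e₁, …, e_d`
(indexed by `Fin d`, so "`k, l` not both in `{1,2,3,4}`" becomes "not both
indices `< 4`"), let `U ≤ ⋀²V` be the span of the `e_k ∧ e_l` with `k < l` not
both lying among the first four basis vectors, and `x = e₁ ∧ e₂ + e₃ ∧ e₄`.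
Then `⟨x⟩ ⊕ U` is not spanned by decomposables, and consequently every subspace
`S ≤ ⋀²V` with `S + U = ⟨x⟩ ⊕ U` is not spanned by decomposables. -/
theorem stmt17 (p : ℕ) [Fact p.Prime] (d : ℕ) (hd : 4 ≤ d)
    (e : Fin d → (Fin d → ℚ_[p])) (he : ∀ k, e k = Pi.single k (1 : ℚ_[p]))
    (U : Submodule ℚ_[p] (ExteriorAlgebra ℚ_[p] (Fin d → ℚ_[p])))
    (hU : U = Submodule.span ℚ_[p]
      {x | ∃ k l : Fin d, k < l ∧ ¬((k : ℕ) < 4 ∧ (l : ℕ) < 4) ∧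
        x = ExteriorAlgebra.ι ℚ_[p] (e k) * ExteriorAlgebra.ι ℚ_[p] (e l)})
    (x : ExteriorAlgebra ℚ_[p] (Fin d → ℚ_[p]))
    (hx : x = ExteriorAlgebra.ι ℚ_[p] (e ⟨0, by omega⟩) *
          ExteriorAlgebra.ι ℚ_[p] (e ⟨1, by omega⟩) +
        ExteriorAlgebra.ι ℚ_[p] (e ⟨2, by omega⟩) *
          ExteriorAlgebra.ι ℚ_[p] (e ⟨3, by omega⟩)) :
    ¬ SpannedByDecomposables ℚ_[p] (Fin d → ℚ_[p])
        (Submodule.span ℚ_[p] {x} ⊔ U) ∧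
      ∀ S : Submodule ℚ_[p] (ExteriorAlgebra ℚ_[p] (Fin d → ℚ_[p])),
        S ≤ grade2 ℚ_[p] (Fin d → ℚ_[p]) →
        S ⊔ U = Submodule.span ℚ_[p] {x} ⊔ U →
        ¬ SpannedByDecomposables ℚ_[p] (Fin d → ℚ_[p]) S := by
  obtain rfl : e = fun k => Pi.single k 1 := funext he
  set π := map (LinearMap.funLeft ℚ_[p] ℚ_[p] (Fin.castLE hd))
  have hπU : ∀ u ∈ U, π u = 0 := by
    suffices U ≤ LinearMap.ker π.toLinearMap from fun u hu => this hu
    rw [hU, Submodule.span_le]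
    rintro _ ⟨k, l, hkl, hkl4, rfl⟩
    have hl : 4 ≤ (l : ℕ) := by
      rw [Fin.lt_def] at hkl
      omega
    simp [π, map_apply_ι, LinearMap.funLeft_castLE_single_of_le hd hl]
  set b := Pi.basisFun ℚ_[p] (Fin 4)
  have hπx : π x = ι ℚ_[p] (b 0) * ι ℚ_[p] (b 1) + ι ℚ_[p] (b 2) * ι ℚ_[p] (b 3) := by
    simp only [hx, π, b, map_add, map_mul, map_apply_ι, Pi.basisFun_apply]
    rw [LinearMap.funLeft_castLE_single_of_lt hd, LinearMap.funLeft_castLE_single_of_lt hd,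
      LinearMap.funLeft_castLE_single_of_lt hd, LinearMap.funLeft_castLE_single_of_lt hd]
    rfl
  have hxx : π x * π x ≠ 0 :=
    hπx ▸ ι_mul_ι_add_ι_mul_ι_mul_self_ne_zero two_ne_zero b.linearIndependent
  have hLU := span_singleton_sup_inter_decompSet_subset hπU hxx
  have hL := not_span_singleton_sup_le hπU hxx
  exact ⟨not_spannedByDecomposables_of_inter_decompSet_subset hLU hL
      (sup_eq_left.mpr le_sup_right),
    fun S _ hS => not_spannedByDecomposables_of_inter_decompSet_subset hLU hL hS⟩
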